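/- Let (u, d) = 𝒮(h) be the unique strong solution of the Ericksen-Leslie system and let (ω, φ) solve the linearized system around (u, d) with divergence-free ω, boundary data (ω, φ) = (0, ξ) on Γ_T, and zero initial data. If additionally ⟨ξ, h⟩ = 0 on Γ_T (ξ is a tangent vector field along h) and ⟨φ, d⟩ = 0 on the parabolic boundary, then ⟨φ, d⟩ ≡ 0 in Q_T; that is, the solution of the linearized system stays tangent to d. -/

import Mathlib

noncomputable section

open Set
open scoped RealInnerProductSpace

abbrev E2 : Type := EuclideanSpace ℝ (Fin 2)
abbrev E3 : Type := EuclideanSpace ℝ (Fin 3)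

/-- Spatial partial derivative in the `i`-th coordinate direction. -/
def pd {F : Type*} [NormedAddCommGroup F] [NormedSpace ℝ F]
    (f : E2 → F) (x : E2) (i : Fin 2) : F :=
  fderiv ℝ f x (EuclideanSpace.single i 1)

/-- The Laplacian `Δf = ∑ᵢ ∂ᵢᵢ f`. -/
def lap {F : Type*} [NormedAddCommGroup F] [NormedSpace ℝ F]
    (f : E2 → F) (x : E2) : F :=
  ∑ i, pd (fun y => pd f y i) x i

/-- The squared gradient `|∇f|² = ∑ᵢ |∂ᵢ f|²`. -/
def gradSq {F : Type*} [NormedAddCommGroup F] [NormedSpace ℝ F]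
    (f : E2 → F) (x : E2) : ℝ :=
  ∑ i, ‖pd f x i‖ ^ 2

/-- The divergence `∇·u = ∑ᵢ ∂ᵢ uⁱ`. -/
def divg (u : E2 → E2) (x : E2) : ℝ :=
  ∑ i, pd u x i i

/-!
Pairing the linearized equation with `d` and the director equation with `φ` and adding, the
term `⟪ω·∇d, d⟫` vanishes because `|d| = 1`, `⟪d, d⟫ = 1` turns `2⟪∇d, ∇φ⟫ d` into the cross
term of `Δ⟪φ, d⟫`, and `ψ = ⟪φ, d⟫` solves `∂ₜψ + u·∇ψ − Δψ = 2|∇d|² ψ`. As `|∇d|²` is bounded,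
the weak maximum principle, applied to `ψ` and `-ψ`, forces `ψ ≡ 0` from its zero parabolic
boundary values.
-/

open Filter
open scoped Topology

theorem IsLocalMax.deriv_deriv_nonpos {g : ℝ → ℝ} {t : ℝ} (hmax : IsLocalMax g t)
    (hc : ContinuousAt g t) : deriv (deriv g) t ≤ 0 := by
  by_contra! hpos
  have hconst : g =ᶠ[𝓝 t] fun _ => g t :=
    ((isLocalMin_of_deriv_deriv_pos hpos hmax.deriv_eq_zero hc).and hmax).mono
      fun s hs => le_antisymm hs.2 hs.1
  have hderiv : deriv g =ᶠ[𝓝 t] fun _ => 0 := hconst.deriv.trans (by simp)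
  simp only [hderiv.deriv_eq, deriv_const', lt_self_iff_false] at hpos

theorem IsLocalMax.fderiv_fderiv_apply_nonpos {E : Type*} [NormedAddCommGroup E]
    [NormedSpace ℝ E] {f : E → ℝ} {x : E} (hmax : IsLocalMax f x) (hf : ContDiffAt ℝ 2 f x)
    (v : E) : fderiv ℝ (fun y => fderiv ℝ f y v) x v ≤ 0 := by
  set ℓ : ℝ → E := fun s => x + s • v
  have hℓ : ∀ s, HasDerivAt ℓ v s := fun s => by
    simpa [ℓ] using ((hasDerivAt_id s).smul_const v).const_add x
  have hℓ0 : ℓ 0 = x := by simp [ℓ]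
  have hℓx : Tendsto ℓ (𝓝 0) (𝓝 x) := hℓ0 ▸ (hℓ 0).continuousAt.tendsto
  have hderiv : deriv (f ∘ ℓ) =ᶠ[𝓝 0] fun s => fderiv ℝ f (ℓ s) v := by
    filter_upwards [hℓx.eventually (hf.eventually (by simp))] with s hs
    exact ((hs.differentiableAt two_ne_zero).hasFDerivAt.comp_hasDerivAt s (hℓ s)).deriv
  have hdf : DifferentiableAt ℝ (fun y => fderiv ℝ f y v) x :=
    ((hf.fderiv_right one_add_one_eq_two.le).differentiableAt one_ne_zero).clm_apply
      (differentiableAt_const v)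
  have hderiv2 : HasDerivAt (fun s => fderiv ℝ f (ℓ s) v)
      (fderiv ℝ (fun y => fderiv ℝ f y v) x v) 0 :=
    hdf.hasFDerivAt.comp_hasDerivAt_of_eq 0 (hℓ 0) hℓ0.symm
  have hmax' : IsLocalMax (f ∘ ℓ) 0 := by
    simpa [IsLocalMax, IsMaxFilter, hℓ0] using hℓx.eventually hmax
  have hcont : ContinuousAt (f ∘ ℓ) 0 :=
    hf.continuousAt.comp_of_eq (hℓ 0).continuousAt hℓ0
  simpa [hderiv.deriv_eq, hderiv2.deriv] using hmax'.deriv_deriv_nonpos hcont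

theorem deriv_nonneg_of_isMaxOn_Icc {f : ℝ → ℝ} {a t : ℝ} (hat : a < t)
    (hf : DifferentiableAt ℝ f t) (hmax : IsMaxOn f (Icc a t) t) : 0 ≤ deriv f t := by
  have hcone : a - t ∈ posTangentConeAt (Icc a t) t :=
    sub_mem_posTangentConeAt_of_segment_subset (by rw [segment_symm, segment_eq_Icc hat.le])
  have h := hmax.localize.hasFDerivWithinAt_nonpos hf.hasDerivAt.hasFDerivAt.hasFDerivWithinAt
    hcone
  simp only [ContinuousLinearMap.toSpanSingleton_apply, smul_eq_mul] at h
  exact nonneg_of_mul_nonpos_right h (sub_neg.2 hat)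

theorem mul_le_deriv_of_isMaxOn_mul_exp {g : ℝ → ℝ} {a t lam : ℝ} (hat : a < t)
    (hg : DifferentiableAt ℝ g t)
    (hmax : IsMaxOn (fun s => g s * Real.exp (-lam * s)) (Icc a t) t) : lam * g t ≤ deriv g t := by
  have hexp : HasDerivAt (fun s => Real.exp (-lam * s)) (Real.exp (-lam * t) * -lam) t := by
    simpa using ((hasDerivAt_id t).const_mul (-lam)).exp
  have h := deriv_nonneg_of_isMaxOn_Icc hat (hg.hasDerivAt.mul hexp).differentiableAt hmax
  rw [(hg.hasDerivAt.mul hexp).deriv] at h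
  nlinarith [Real.exp_pos (-lam * t)]

section PartialDerivatives

variable {F : Type*} [NormedAddCommGroup F] [NormedSpace ℝ F] {f g : E2 → F} {x : E2}

theorem pd_fun_neg (i : Fin 2) : pd (fun y => -f y) x i = -pd f x i := by
  simp only [pd, fderiv_fun_neg, _root_.neg_apply]

theorem lap_fun_neg : lap (fun y => -f y) x = -lap f x := by
  simp only [lap, pd_fun_neg, Finset.sum_neg_distrib]

theorem pd_fun_add (hf : DifferentiableAt ℝ f x) (hg : DifferentiableAt ℝ g x) (i : Fin 2) :
    pd (fun y => f y + g y) x i = pd f x i + pd g x i := by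
  simp only [pd, fderiv_fun_add hf hg, _root_.add_apply]

theorem differentiableAt_pd (hf : ContDiffAt ℝ 2 f x) (i : Fin 2) :
    DifferentiableAt ℝ (fun y => pd f y i) x :=
  ((hf.fderiv_right one_add_one_eq_two.le).differentiableAt one_ne_zero).clm_apply
    (differentiableAt_const _)

theorem IsLocalMax.lap_nonpos {f : E2 → ℝ} (hmax : IsLocalMax f x) (hf : ContDiffAt ℝ 2 f x) :
    lap f x ≤ 0 :=
  Finset.sum_nonpos fun _ _ => hmax.fderiv_fderiv_apply_nonpos hf _

end PartialDerivatives

section InnerProduct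

variable {F : Type*} [NormedAddCommGroup F] [InnerProductSpace ℝ F] {f g : E2 → F} {x : E2}

theorem pd_inner (hf : DifferentiableAt ℝ f x) (hg : DifferentiableAt ℝ g x) (i : Fin 2) :
    pd (fun y => ⟪f y, g y⟫) x i = ⟪pd f x i, g x⟫ + ⟪f x, pd g x i⟫ :=
  (fderiv_inner_apply (𝕜 := ℝ) hf hg _).trans (add_comm _ _)

theorem lap_inner (hf : ContDiffAt ℝ 2 f x) (hg : ContDiffAt ℝ 2 g x) :
    lap (fun y => ⟪f y, g y⟫) x
      = ⟪lap f x, g x⟫ + 2 * ∑ i, ⟪pd f x i, pd g x i⟫ + ⟪f x, lap g x⟫ := by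
  have hf1 := hf.differentiableAt two_ne_zero
  have hg1 := hg.differentiableAt two_ne_zero
  have hpd : ∀ i, pd (fun y => pd (fun z => ⟪f z, g z⟫) y i) x i
      = ⟪pd (fun y => pd f y i) x i, g x⟫ + 2 * ⟪pd f x i, pd g x i⟫
        + ⟪f x, pd (fun y => pd g y i) x i⟫ := fun i => by
    have hev : (fun y => pd (fun z => ⟪f z, g z⟫) y i)
        =ᶠ[𝓝 x] fun y => ⟪pd f y i, g y⟫ + ⟪f y, pd g y i⟫ := by
      filter_upwards [hf.eventually (by simp), hg.eventually (by simp)] with y hfy hgy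
      exact pd_inner (hfy.differentiableAt two_ne_zero) (hgy.differentiableAt two_ne_zero) i
    rw [pd, hev.fderiv_eq, ← pd, pd_fun_add ((differentiableAt_pd hf i).inner ℝ hg1)
      (hf1.inner ℝ (differentiableAt_pd hg i)), pd_inner (differentiableAt_pd hf i) hg1,
      pd_inner hf1 (differentiableAt_pd hg i)]
    ring
  simp only [lap, Finset.sum_congr rfl fun i _ => hpd i, Finset.sum_add_distrib, sum_inner,
    inner_sum, Finset.mul_sum]

theorem inner_fderiv_apply_self_eq_zero {E : Type*} [NormedAddCommGroup E] [NormedSpace ℝ E]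
    {f : E → F} {x : E} {r : ℝ} (hf : DifferentiableAt ℝ f x) (hr : ∀ᶠ y in 𝓝 x, ‖f y‖ = r)
    (v : E) : ⟪fderiv ℝ f x v, f x⟫ = 0 := by
  have hconst : (fun y => ⟪f y, f y⟫) =ᶠ[𝓝 x] fun _ => r ^ 2 := by
    filter_upwards [hr] with y hy
    rw [real_inner_self_eq_norm_sq, hy]
  have h := fderiv_inner_apply (𝕜 := ℝ) hf hf v
  rw [hconst.fderiv_eq, fderiv_const_apply, _root_.zero_apply] at h
  linarith [real_inner_comm (f x) (fderiv ℝ f x v)]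

end InnerProduct

theorem inner_linearized_director_eq {F : Type*} [NormedAddCommGroup F] [InnerProductSpace ℝ F]
    {d φ : E2 × ℝ → F} {x : E2} {t : ℝ} (v w : E2)
    (hd_x : ContDiffAt ℝ 2 (fun y => d (y, t)) x) (hφ_x : ContDiffAt ℝ 2 (fun y => φ (y, t)) x)
    (hd_t : DifferentiableAt ℝ (fun s => d (x, s)) t)
    (hφ_t : DifferentiableAt ℝ (fun s => φ (x, s)) t)
    (hd_unit : ∀ᶠ y in 𝓝 x, ‖d (y, t)‖ = 1)
    (hd_pde : deriv (fun s => d (x, s)) t + fderiv ℝ (fun y => d (y, t)) x v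
        - lap (fun y => d (y, t)) x = gradSq (fun y => d (y, t)) x • d (x, t))
    (hφ_pde : deriv (fun s => φ (x, s)) t - lap (fun y => φ (y, t)) x
        + fderiv ℝ (fun y => φ (y, t)) x v + fderiv ℝ (fun y => d (y, t)) x w
      = gradSq (fun y => d (y, t)) x • φ (x, t)
        + (2 * ∑ i, ⟪pd (fun y => d (y, t)) x i, pd (fun y => φ (y, t)) x i⟫) • d (x, t)) :
    deriv (fun s => ⟪φ (x, s), d (x, s)⟫) t + fderiv ℝ (fun y => ⟪φ (y, t), d (y, t)⟫) x v
        - lap (fun y => ⟪φ (y, t), d (y, t)⟫) x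
      = 2 * gradSq (fun y => d (y, t)) x * ⟪φ (x, t), d (x, t)⟫ := by
  have hunit : ⟪d (x, t), d (x, t)⟫ = 1 := by
    rw [real_inner_self_eq_norm_sq, hd_unit.self_of_nhds, one_pow]
  have horth := inner_fderiv_apply_self_eq_zero (hd_x.differentiableAt two_ne_zero) hd_unit w
  have hφd := congrArg (⟪·, d (x, t)⟫) hφ_pde
  have hdφ := congrArg (⟪φ (x, t), ·⟫) hd_pde
  simp only [inner_add_left, inner_sub_left, real_inner_smul_left, horth, hunit] at hφd
  simp only [inner_add_right, inner_sub_right, real_inner_smul_right] at hdφ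
  have hcomm : ∑ i, ⟪pd (fun y => d (y, t)) x i, pd (fun y => φ (y, t)) x i⟫
      = ∑ i, ⟪pd (fun y => φ (y, t)) x i, pd (fun y => d (y, t)) x i⟫ :=
    Finset.sum_congr rfl fun i _ => real_inner_comm _ _
  rw [deriv_inner_apply (𝕜 := ℝ) hφ_t hd_t,
    fderiv_inner_apply (𝕜 := ℝ) (hφ_x.differentiableAt two_ne_zero)
      (hd_x.differentiableAt two_ne_zero), lap_inner hφ_x hd_x]
  linear_combination hφd + hdφ + 2 * hcomm

section MaximumPrinciple

variable {Ω : Set E2} {T K : ℝ} {ψ : E2 × ℝ → ℝ} {b : E2 × ℝ → E2} {c : E2 × ℝ → ℝ}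

theorem mul_le_of_isMaxOn_of_subsolution {lam t₀ : ℝ} {x₀ : E2} (ht₀ : 0 < t₀)
    (hψ_x : ContDiffAt ℝ 2 (fun y => ψ (y, t₀)) x₀)
    (hψ_t : DifferentiableAt ℝ (fun s => ψ (x₀, s)) t₀)
    (hpde : deriv (fun s => ψ (x₀, s)) t₀ + fderiv ℝ (fun y => ψ (y, t₀)) x₀ (b (x₀, t₀))
        - lap (fun y => ψ (y, t₀)) x₀ ≤ c (x₀, t₀) * ψ (x₀, t₀))
    (hspace : IsLocalMax (fun y => ψ (y, t₀)) x₀)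
    (htime : IsMaxOn (fun s => ψ (x₀, s) * Real.exp (-lam * s)) (Icc 0 t₀) t₀) :
    lam * ψ (x₀, t₀) ≤ c (x₀, t₀) * ψ (x₀, t₀) := by
  have hdt := mul_le_deriv_of_isMaxOn_mul_exp ht₀ hψ_t htime
  have hlap := hspace.lap_nonpos hψ_x
  rw [hspace.fderiv_eq_zero, _root_.zero_apply, add_zero] at hpde
  linarith

theorem nonpos_of_subsolution_of_lt (hΩo : IsOpen Ω) (hΩb : Bornology.IsBounded Ω)
    (hψ_cont : ContinuousOn ψ (closure Ω ×ˢ Icc 0 T))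
    (hψ_x : ∀ t ∈ Ioo 0 T, ∀ x ∈ Ω, ContDiffAt ℝ 2 (fun y => ψ (y, t)) x)
    (hψ_t : ∀ t ∈ Ioo 0 T, ∀ x ∈ Ω, DifferentiableAt ℝ (fun s => ψ (x, s)) t)
    (hc : ∀ t ∈ Ioo 0 T, ∀ x ∈ Ω, c (x, t) ≤ K)
    (hpde : ∀ t ∈ Ioo 0 T, ∀ x ∈ Ω,
      deriv (fun s => ψ (x, s)) t + fderiv ℝ (fun y => ψ (y, t)) x (b (x, t))
        - lap (fun y => ψ (y, t)) x ≤ c (x, t) * ψ (x, t))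
    (hbdry : ∀ x ∈ frontier Ω, ∀ t ∈ Icc 0 T, ψ (x, t) ≤ 0)
    (hinit : ∀ x ∈ closure Ω, ψ (x, 0) ≤ 0) :
    ∀ x ∈ closure Ω, ∀ t ∈ Ico 0 T, ψ (x, t) ≤ 0 := by
  intro x hx t ht
  -- The weight `exp (-(K + 1) s)` makes a positive maximum incompatible with `c ≤ K`.
  set w : E2 × ℝ → ℝ := fun q => ψ q * Real.exp (-(K + 1) * q.2)
  have hQ : closure Ω ×ˢ Icc 0 t ⊆ closure Ω ×ˢ Icc 0 T :=
    prod_mono_right (Icc_subset_Icc_right ht.2.le)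
  obtain ⟨⟨x₁, t₁⟩, ⟨hx₁, ht₁⟩, hmax⟩ :=
    (hΩb.isCompact_closure.prod isCompact_Icc).exists_isMaxOn (f := w) ⟨(x, t), hx, ht.1, le_rfl⟩
      ((hψ_cont.mono hQ).mul (Continuous.continuousOn (by fun_prop)))
  have hw : ψ (x, t) * Real.exp (-(K + 1) * t) ≤ w (x₁, t₁) := hmax ⟨hx, ht.1, le_rfl⟩
  by_contra! hpos
  have hψ₁ : 0 < ψ (x₁, t₁) :=
    pos_of_mul_pos_left (hw.trans_lt' (by positivity)) (Real.exp_pos _).le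
  have hx₁Ω : x₁ ∈ Ω := by
    by_contra hx₁Ω
    have hfr : x₁ ∈ frontier Ω := ⟨hx₁, by rwa [hΩo.interior_eq]⟩
    exact hψ₁.not_ge (hbdry x₁ hfr t₁ ⟨ht₁.1, ht₁.2.trans ht.2.le⟩)
  have ht₁pos : 0 < t₁ := ht₁.1.lt_of_ne' fun h => hψ₁.not_ge (h ▸ hinit x₁ hx₁)
  have ht₁T : t₁ ∈ Ioo 0 T := ⟨ht₁pos, ht₁.2.trans_lt ht.2⟩
  have hspace : IsLocalMax (fun y => ψ (y, t₁)) x₁ := by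
    filter_upwards [hΩo.mem_nhds hx₁Ω] with y hy
    exact le_of_mul_le_mul_right (hmax ⟨subset_closure hy, ht₁⟩) (Real.exp_pos _)
  have htime : IsMaxOn (fun s => ψ (x₁, s) * Real.exp (-(K + 1) * s)) (Icc 0 t₁) t₁ :=
    fun s hs => hmax ⟨hx₁, hs.1, hs.2.trans ht₁.2⟩
  have h := mul_le_of_isMaxOn_of_subsolution ht₁pos (hψ_x t₁ ht₁T x₁ hx₁Ω)
    (hψ_t t₁ ht₁T x₁ hx₁Ω) (hpde t₁ ht₁T x₁ hx₁Ω) hspace htime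
  nlinarith [hc t₁ ht₁T x₁ hx₁Ω]

theorem nonpos_of_subsolution (hΩo : IsOpen Ω) (hΩb : Bornology.IsBounded Ω) (hT : 0 < T)
    (hψ_cont : ContinuousOn ψ (closure Ω ×ˢ Icc 0 T))
    (hψ_x : ∀ t ∈ Ioo 0 T, ∀ x ∈ Ω, ContDiffAt ℝ 2 (fun y => ψ (y, t)) x)
    (hψ_t : ∀ t ∈ Ioo 0 T, ∀ x ∈ Ω, DifferentiableAt ℝ (fun s => ψ (x, s)) t)
    (hc : ∀ t ∈ Ioo 0 T, ∀ x ∈ Ω, c (x, t) ≤ K)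
    (hpde : ∀ t ∈ Ioo 0 T, ∀ x ∈ Ω,
      deriv (fun s => ψ (x, s)) t + fderiv ℝ (fun y => ψ (y, t)) x (b (x, t))
        - lap (fun y => ψ (y, t)) x ≤ c (x, t) * ψ (x, t))
    (hbdry : ∀ x ∈ frontier Ω, ∀ t ∈ Icc 0 T, ψ (x, t) ≤ 0)
    (hinit : ∀ x ∈ closure Ω, ψ (x, 0) ≤ 0) :
    ∀ x ∈ closure Ω, ∀ t ∈ Icc 0 T, ψ (x, t) ≤ 0 := by
  intro x hx t ht
  have hlt := nonpos_of_subsolution_of_lt hΩo hΩb hψ_cont hψ_x hψ_t hc hpde hbdry hinit x hx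
  rcases ht.2.lt_or_eq with htT | rfl
  · exact hlt t ⟨ht.1, htT⟩
  have hcont : ContinuousWithinAt (fun s => ψ (x, s)) (Iio t) t :=
    ((hψ_cont.comp (by fun_prop) fun s hs => ⟨hx, hs⟩) t ht).mono_of_mem_nhdsWithin
      (Icc_mem_nhdsLT hT)
  refine le_of_tendsto hcont ?_
  filter_upwards [Ioo_mem_nhdsLT hT] with s hs
  exact hlt s ⟨hs.1.le, hs.2⟩

theorem eq_zero_of_transport_diffusion_eq (hΩo : IsOpen Ω) (hΩb : Bornology.IsBounded Ω)
    (hT : 0 < T) (hψ_cont : ContinuousOn ψ (closure Ω ×ˢ Icc 0 T))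
    (hψ_x : ∀ t ∈ Ioo 0 T, ∀ x ∈ Ω, ContDiffAt ℝ 2 (fun y => ψ (y, t)) x)
    (hψ_t : ∀ t ∈ Ioo 0 T, ∀ x ∈ Ω, DifferentiableAt ℝ (fun s => ψ (x, s)) t)
    (hc : ∀ t ∈ Ioo 0 T, ∀ x ∈ Ω, c (x, t) ≤ K)
    (hpde : ∀ t ∈ Ioo 0 T, ∀ x ∈ Ω,
      deriv (fun s => ψ (x, s)) t + fderiv ℝ (fun y => ψ (y, t)) x (b (x, t))
        - lap (fun y => ψ (y, t)) x = c (x, t) * ψ (x, t))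
    (hbdry : ∀ x ∈ frontier Ω, ∀ t ∈ Icc 0 T, ψ (x, t) = 0)
    (hinit : ∀ x ∈ closure Ω, ψ (x, 0) = 0) :
    ∀ x ∈ closure Ω, ∀ t ∈ Icc 0 T, ψ (x, t) = 0 := by
  have hle := nonpos_of_subsolution hΩo hΩb hT hψ_cont hψ_x hψ_t hc
    (fun t ht x hx => (hpde t ht x hx).le) (fun x hx t ht => (hbdry x hx t ht).le)
    (fun x hx => (hinit x hx).le)
  have hge := nonpos_of_subsolution (ψ := fun q => -ψ q) (b := b) hΩo hΩb hT hψ_cont.neg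
    (fun t ht x hx => (hψ_x t ht x hx).neg) (fun t ht x hx => (hψ_t t ht x hx).neg) hc
    (fun t ht x hx => by
      rw [deriv.fun_neg, fderiv_fun_neg, lap_fun_neg, _root_.neg_apply]
      linarith [hpde t ht x hx])
    (fun x hx t ht => by simp [hbdry x hx t ht]) (fun x hx => by simp [hinit x hx])
  exact fun x hx t ht => le_antisymm (hle x hx t ht) (neg_nonpos.1 (hge x hx t ht))

end MaximumPrinciple

theorem linearized_solution_stays_tangent_general
    (Ω : Set E2) (T : ℝ) (hΩo : IsOpen Ω) (hΩb : Bornology.IsBounded Ω) (hT : 0 < T)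
    (u ω : E2 × ℝ → E2) (d φ : E2 × ℝ → E3)
    -- regularity
    (hd_cont : ContinuousOn d (closure Ω ×ˢ Icc 0 T))
    (hφ_cont : ContinuousOn φ (closure Ω ×ˢ Icc 0 T))
    (hd_x : ∀ t ∈ Ioo 0 T, ∀ x ∈ Ω, ContDiffAt ℝ 2 (fun y => d (y, t)) x)
    (hφ_x : ∀ t ∈ Ioo 0 T, ∀ x ∈ Ω, ContDiffAt ℝ 2 (fun y => φ (y, t)) x)
    (hd_t : ∀ t ∈ Ioo 0 T, ∀ x ∈ Ω, DifferentiableAt ℝ (fun s => d (x, s)) t)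
    (hφ_t : ∀ t ∈ Ioo 0 T, ∀ x ∈ Ω, DifferentiableAt ℝ (fun s => φ (x, s)) t)
    (hgrad_bdd : ∃ K : ℝ, ∀ t ∈ Ioo 0 T, ∀ x ∈ Ω, gradSq (fun y => d (y, t)) x ≤ K)
    -- |d| = 1
    (hd_unit : ∀ x ∈ closure Ω, ∀ t ∈ Icc (0 : ℝ) T, ‖d (x, t)‖ = 1)
    -- the director equation: ∂ₜ d + u·∇d − Δd = |∇d|² d
    (hd_pde : ∀ t ∈ Ioo 0 T, ∀ x ∈ Ω,
      deriv (fun s => d (x, s)) t + fderiv ℝ (fun y => d (y, t)) x (u (x, t))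
          - lap (fun y => d (y, t)) x
        = gradSq (fun y => d (y, t)) x • d (x, t))
    -- the linearized equation: ∂ₜ φ − Δφ + u·∇φ + ω·∇d = |∇d|² φ + 2⟨∇d,∇φ⟩ d
    (hφ_pde : ∀ t ∈ Ioo 0 T, ∀ x ∈ Ω,
      deriv (fun s => φ (x, s)) t - lap (fun y => φ (y, t)) x
          + fderiv ℝ (fun y => φ (y, t)) x (u (x, t))
          + fderiv ℝ (fun y => d (y, t)) x (ω (x, t))
        = gradSq (fun y => d (y, t)) x • φ (x, t)
          + (2 * ∑ i, ⟪pd (fun y => d (y, t)) x i, pd (fun y => φ (y, t)) x i⟫)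
              • d (x, t))
    -- ⟨φ, d⟩ vanishes on the parabolic boundary
    (hbdry : ∀ x ∈ frontier Ω, ∀ t ∈ Icc (0 : ℝ) T, ⟪φ (x, t), d (x, t)⟫ = 0)
    (hinit : ∀ x ∈ closure Ω, ⟪φ (x, 0), d (x, 0)⟫ = 0) :
    ∀ x ∈ closure Ω, ∀ t ∈ Icc (0 : ℝ) T, ⟪φ (x, t), d (x, t)⟫ = 0 := by
  obtain ⟨K, hK⟩ := hgrad_bdd
  have hd_unit_near : ∀ t ∈ Ioo 0 T, ∀ x ∈ Ω, ∀ᶠ y in 𝓝 x, ‖d (y, t)‖ = 1 :=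
    fun t ht x hx => eventually_of_mem (hΩo.mem_nhds hx) fun y hy =>
      hd_unit y (subset_closure hy) t (Ioo_subset_Icc_self ht)
  exact eq_zero_of_transport_diffusion_eq (ψ := fun q => ⟪φ q, d q⟫) (b := u)
    (c := fun q => 2 * gradSq (fun y => d (y, q.2)) q.1) (K := 2 * K) hΩo hΩb hT
    (hφ_cont.inner hd_cont) (fun t ht x hx => (hφ_x t ht x hx).inner ℝ (hd_x t ht x hx))
    (fun t ht x hx => (hφ_t t ht x hx).inner ℝ (hd_t t ht x hx))
    (fun t ht x hx => by linarith [hK t ht x hx])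
    (fun t ht x hx => inner_linearized_director_eq (u (x, t)) (ω (x, t)) (hd_x t ht x hx)
      (hφ_x t ht x hx) (hd_t t ht x hx) (hφ_t t ht x hx) (hd_unit_near t ht x hx)
      (hd_pde t ht x hx) (hφ_pde t ht x hx))
    hbdry hinit

/-- **The linearized flow stays tangent to `d`.**  Let `(u,d)` be the strong solution
of the Ericksen–Leslie system (`|d| = 1`, `d` solving the director equation) and
`(ω,φ)` a solution of the linearized system around `(u,d)` with divergence-free `ω`,
boundary data `(ω,φ) = (0,ξ)` on `Γ_T` and zero initial data.  If `⟨ξ,h⟩ = 0` on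
`Γ_T` (so that `⟨φ,d⟩ = 0` on the parabolic boundary), then `⟨φ,d⟩ ≡ 0` in `Q_T`. -/
theorem linearized_solution_stays_tangent
    (Ω : Set E2) (T : ℝ) (hΩo : IsOpen Ω) (hΩb : Bornology.IsBounded Ω) (hT : 0 < T)
    (u ω : E2 × ℝ → E2) (d φ : E2 × ℝ → E3)
    -- regularity
    (hd_cont : ContinuousOn d (closure Ω ×ˢ Icc 0 T))
    (hφ_cont : ContinuousOn φ (closure Ω ×ˢ Icc 0 T))
    (hd_x : ∀ t ∈ Ioo 0 T, ∀ x ∈ Ω, ContDiffAt ℝ 2 (fun y => d (y, t)) x)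
    (hφ_x : ∀ t ∈ Ioo 0 T, ∀ x ∈ Ω, ContDiffAt ℝ 2 (fun y => φ (y, t)) x)
    (hd_t : ∀ t ∈ Ioo 0 T, ∀ x ∈ Ω, DifferentiableAt ℝ (fun s => d (x, s)) t)
    (hφ_t : ∀ t ∈ Ioo 0 T, ∀ x ∈ Ω, DifferentiableAt ℝ (fun s => φ (x, s)) t)
    (hgrad_bdd : ∃ K : ℝ, ∀ t ∈ Ioo 0 T, ∀ x ∈ Ω, gradSq (fun y => d (y, t)) x ≤ K)
    -- |d| = 1
    (hd_unit : ∀ x ∈ closure Ω, ∀ t ∈ Icc (0 : ℝ) T, ‖d (x, t)‖ = 1)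
    -- divergence-free fields
    (hdiv_u : ∀ t ∈ Ioo 0 T, ∀ x ∈ Ω, divg (fun y => u (y, t)) x = 0)
    (hdiv_ω : ∀ t ∈ Ioo 0 T, ∀ x ∈ Ω, divg (fun y => ω (y, t)) x = 0)
    -- the director equation: ∂ₜ d + u·∇d − Δd = |∇d|² d
    (hd_pde : ∀ t ∈ Ioo 0 T, ∀ x ∈ Ω,
      deriv (fun s => d (x, s)) t + fderiv ℝ (fun y => d (y, t)) x (u (x, t))
          - lap (fun y => d (y, t)) x
        = gradSq (fun y => d (y, t)) x • d (x, t))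
    -- the linearized equation: ∂ₜ φ − Δφ + u·∇φ + ω·∇d = |∇d|² φ + 2⟨∇d,∇φ⟩ d
    (hφ_pde : ∀ t ∈ Ioo 0 T, ∀ x ∈ Ω,
      deriv (fun s => φ (x, s)) t - lap (fun y => φ (y, t)) x
          + fderiv ℝ (fun y => φ (y, t)) x (u (x, t))
          + fderiv ℝ (fun y => d (y, t)) x (ω (x, t))
        = gradSq (fun y => d (y, t)) x • φ (x, t)
          + (2 * ∑ i, ⟪pd (fun y => d (y, t)) x i, pd (fun y => φ (y, t)) x i⟫)
              • d (x, t))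
    -- ⟨φ, d⟩ vanishes on the parabolic boundary
    (hbdry : ∀ x ∈ frontier Ω, ∀ t ∈ Icc (0 : ℝ) T, ⟪φ (x, t), d (x, t)⟫ = 0)
    (hinit : ∀ x ∈ closure Ω, ⟪φ (x, 0), d (x, 0)⟫ = 0) :
    ∀ x ∈ closure Ω, ∀ t ∈ Icc (0 : ℝ) T, ⟪φ (x, t), d (x, t)⟫ = 0 :=
  linearized_solution_stays_tangent_general Ω T hΩo hΩb hT u ω d φ hd_cont hφ_cont hd_x hφ_x hd_t
    hφ_t hgrad_bdd hd_unit hd_pde hφ_pde hbdry hinit
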